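/- Let Σ be a countable Markov shift, τ ∈ R, and (ν_n), ν flow-invariant probability measures for the suspension flow with μ_n = ψ(ν_n), μ = ψ(ν). Then (ν_n) converges on cylinders to λν for some λ ∈ (0,1] if and only if (μ_n) converges to μ in the weak* topology and ∫τ dμ / ∫τ dμ_n → λ. -/

import Mathlib

open MeasureTheory Filter Topology
open scoped NNReal ENNReal

/-- The underlying set of the countable Markov shift with transition matrix `B`. -/
def ShiftSet (B : ℕ → ℕ → Prop) : Set (ℕ → ℕ) := {x | ∀ n, B (x n) (x (n + 1))}

/-- The countable Markov shift determined by the transition matrix `B`,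
with the subspace topology of the product topology and the induced Borel structure. -/
abbrev Shift (B : ℕ → ℕ → Prop) : Type := ↥(ShiftSet B)

/-- The cylinder set determined by a finite word `w`. -/
def cyl (B : ℕ → ℕ → Prop) (w : List ℕ) : Set (Shift B) :=
  {x | ∀ j : Fin w.length, x.val j = w.get j}

/-- The shift map. -/
def shiftMap (B : ℕ → ℕ → Prop) : Shift B → Shift B :=
  fun x => ⟨fun n => x.val (n + 1), fun n => x.property (n + 1)⟩

/-- A measure is shift invariant if the measure of the preimage under the shift of
any Borel set coincides with the measure of the set. -/
def IsShiftInvariant (B : ℕ → ℕ → Prop) (μ : Measure (Shift B)) : Prop :=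
  ∀ s : Set (Shift B), MeasurableSet s → μ (shiftMap B ⁻¹' s) = μ s

/-- The class `R` of roof functions: uniformly continuous (in the shift metric), bounded
away from zero, with finite second variation, and tending to infinity as the first symbol
tends to infinity. -/
def ClassR (B : ℕ → ℕ → Prop) (τ : Shift B → ℝ) : Prop :=
  (∀ ε > (0 : ℝ), ∃ N : ℕ, ∀ x y : Shift B,
      (∀ j < N, x.val j = y.val j) → |τ x - τ y| < ε) ∧
  (∃ c > (0 : ℝ), ∀ x, c ≤ τ x) ∧
  (∃ V : ℝ, ∀ x y : Shift B, x.val 0 = y.val 0 → x.val 1 = y.val 1 → |τ x - τ y| ≤ V) ∧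
  (∀ M : ℝ, ∃ k : ℕ, ∀ x : Shift B, k ≤ x.val 0 → M ≤ τ x)

/-- The flow-invariant measure of the suspension flow with roof `τ` associated to a
shift-invariant probability measure `μ` with `∫ τ dμ < ∞`: the normalized restriction of
`μ × Leb` to the region below the graph of `τ`. -/
noncomputable def suspMeasure (B : ℕ → ℕ → Prop) (τ : Shift B → ℝ)
    (μ : Measure (Shift B)) [SFinite μ] : Measure (Shift B × ℝ) :=
  (ENNReal.ofReal (∫ x, τ x ∂μ))⁻¹ •
    ((μ.prod volume).restrict {p : Shift B × ℝ | 0 ≤ p.2 ∧ p.2 < τ p.1})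

namespace Stmt19Aux

variable {B : ℕ → ℕ → Prop}

lemma isOpen_agree (z : ℕ → ℕ) (N : ℕ) : IsOpen {y : Shift B | ∀ j < N, y.val j = z j} := by
  have : {y : Shift B | ∀ j < N, y.val j = z j}
      = ⋂ j ∈ Finset.range N, ((fun y : Shift B => y.val j) ⁻¹' {z j}) := by
    ext y; simp [Set.mem_iInter]
  rw [this]
  refine isOpen_biInter_finset fun j _ => ?_
  exact (isOpen_discrete _).preimage ((continuous_apply j).comp continuous_subtype_val)

lemma cyl_eq (w : List ℕ) : cyl B w = {y : Shift B | ∀ j < w.length, y.val j = w.getD j 0} := by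
  ext y
  constructor
  · intro h j hj
    have := h ⟨j, hj⟩
    simpa [List.getD_eq_getElem?_getD, List.getElem?_eq_getElem hj] using this
  · intro h j
    have := h j.1 j.2
    simpa [List.getD_eq_getElem?_getD, List.getElem?_eq_getElem j.2] using this

lemma isOpen_cyl (w : List ℕ) : IsOpen (cyl B w) := by
  rw [cyl_eq]; exact isOpen_agree _ _

lemma isClosed_cyl (w : List ℕ) : IsClosed (cyl B w) := by
  have : (cyl B w)ᶜ = ⋃ j : Fin w.length, ((fun y : Shift B => y.val j) ⁻¹' {w.get j}ᶜ) := by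
    ext y; simp [cyl, Set.mem_iUnion, not_forall]
  refine ⟨?_⟩
  rw [this]
  exact isOpen_iUnion fun j =>
    (isOpen_discrete _).preimage ((continuous_apply (j : ℕ)).comp continuous_subtype_val)

lemma measurableSet_cyl (w : List ℕ) : MeasurableSet (cyl B w) :=
  (isOpen_cyl w).measurableSet

/-- neighborhood basis of agreement sets -/
lemma exists_agree_subset {U : Set (Shift B)} (hU : IsOpen U) {x : Shift B} (hx : x ∈ U) :
    ∃ N, {y : Shift B | ∀ j < N, y.val j = x.val j} ⊆ U := by
  obtain ⟨V, hV, rfl⟩ := isOpen_induced_iff.mp hU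
  obtain ⟨I, u, hu, hsub⟩ := isOpen_pi_iff.mp hV x.val hx
  refine ⟨(I.sup id) + 1, fun y hy => ?_⟩
  refine hsub fun i hi => ?_
  have : y.val i = x.val i := hy i (Nat.lt_succ_of_le (Finset.le_sup (f := id) hi))
  rw [this]; exact (hu i hi).2

lemma cyl_anti {w v : List ℕ} (h : w <+: v) : cyl B v ⊆ cyl B w := by
  rw [cyl_eq, cyl_eq]
  intro y hy j hj
  rw [hy j (lt_of_lt_of_le hj h.length_le)]
  obtain ⟨t, rfl⟩ := h
  rw [List.getD_eq_getElem?_getD, List.getD_eq_getElem?_getD,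
    List.getElem?_append_left hj]

lemma cyl_disjoint {w v : List ℕ} (hwv : ¬ w <+: v) (hvw : ¬ v <+: w) :
    Disjoint (cyl B w) (cyl B v) := by
  rw [Set.disjoint_left]
  intro y hyw hyv
  rw [cyl_eq] at hyw hyv
  rcases le_total w.length v.length with h | h
  · apply hwv
    rw [List.prefix_iff_eq_take]
    apply List.ext_getElem (by simp [Nat.min_eq_left h])
    intro j h1 h2
    have e1 := hyw j h1
    have e2 := hyv j (lt_of_lt_of_le h1 h)
    have : w.getD j 0 = v.getD j 0 := by rw [← e1, ← e2]
    simpa [List.getD_eq_getElem?_getD, List.getElem?_eq_getElem, h1,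
      lt_of_lt_of_le h1 h, List.getElem?_take, List.getElem_take] using this
  · apply hvw
    rw [List.prefix_iff_eq_take]
    apply List.ext_getElem (by simp [Nat.min_eq_left h])
    intro j h1 h2
    have e1 := hyv j h1
    have e2 := hyw j (lt_of_lt_of_le h1 h)
    have : v.getD j 0 = w.getD j 0 := by rw [← e1, ← e2]
    simpa [List.getD_eq_getElem?_getD, List.getElem?_eq_getElem, h1,
      lt_of_lt_of_le h1 h, List.getElem?_take, List.getElem_take] using this

open scoped Classical in
/-- disjointification of finite families of cylinders -/
lemma exists_disjoint_subfamily (s : Finset (List ℕ)) :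
    ∃ t ⊆ s, ((t : Set (List ℕ)).Pairwise fun w v => Disjoint (cyl B w) (cyl B v)) ∧
      (⋃ w ∈ t, cyl B w) = ⋃ w ∈ s, cyl B w := by
  refine ⟨s.filter (fun w => ∀ v ∈ s, v <+: w → w <+: v), Finset.filter_subset _ _, ?_, ?_⟩
  · intro w hw v hv hne
    simp only [Finset.coe_filter, Set.mem_setOf_eq, Finset.mem_filter] at hw hv
    refine cyl_disjoint (fun h => ?_) (fun h => ?_)
    · have h' := hv.2 w hw.1 h
      exact hne (h.eq_of_length (le_antisymm h.length_le h'.length_le))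
    · have h' := hw.2 v hv.1 h
      exact hne (h'.eq_of_length (le_antisymm h'.length_le h.length_le))
  · apply Set.Subset.antisymm
    · exact Set.biUnion_subset_biUnion_left (by exact_mod_cast Finset.filter_subset _ _)
    · simp only [Set.iUnion_subset_iff]
      intro w hw
      have key : ∀ m : ℕ, ∀ w ∈ s, w.length ≤ m →
          ∃ u ∈ s.filter (fun w => ∀ v ∈ s, v <+: w → w <+: v), u <+: w := by
        intro m
        induction m with
        | zero =>
          intro w hws hlen
          have : w = [] := List.length_eq_zero_iff.mp (Nat.le_zero.mp hlen)
          subst this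
          refine ⟨[], ?_, List.nil_prefix⟩
          simp only [Finset.mem_filter]
          exact ⟨hws, fun v hv hprefix => by simp [List.prefix_nil.mp hprefix]⟩
        | succ m ih =>
          intro w hws hlen
          by_cases hmin : ∀ v ∈ s, v <+: w → w <+: v
          · exact ⟨w, Finset.mem_filter.mpr ⟨hws, hmin⟩, List.prefix_refl w⟩
          · push_neg at hmin
            obtain ⟨v, hvs, hvw, hwv⟩ := hmin
            have hlt : v.length < w.length := by
              rcases lt_or_eq_of_le hvw.length_le with h | h
              · exact h
              · exact absurd (hvw.eq_of_length h ▸ List.prefix_refl w) hwv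
            obtain ⟨u, hu, huv⟩ := ih v hvs (by omega)
            exact ⟨u, hu, huv.trans hvw⟩
      obtain ⟨u, hu, huw⟩ := key w.length w hw le_rfl
      exact (cyl_anti huw).trans (Set.subset_biUnion_of_mem hu)

/-- the word given by the first N symbols of x -/
def word (x : Shift B) (N : ℕ) : List ℕ := List.ofFn (fun j : Fin N => x.val j)

lemma cyl_word (x : Shift B) (N : ℕ) :
    cyl B (word x N) = {y : Shift B | ∀ j < N, y.val j = x.val j} := by
  rw [cyl_eq]
  ext y
  simp only [word, List.length_ofFn, Set.mem_setOf_eq]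
  refine forall_congr' fun j => imp_congr_right fun hj => ?_
  rw [List.getD_eq_getElem?_getD]
  simp [word, List.getElem?_ofFn, hj]

lemma mem_cyl_word (x : Shift B) (N : ℕ) : x ∈ cyl B (word x N) := by
  rw [cyl_word]; exact fun j _ => rfl

lemma continuous_of_unif (τ : Shift B → ℝ)
    (h : ∀ ε > (0 : ℝ), ∃ N : ℕ, ∀ x y : Shift B,
      (∀ j < N, x.val j = y.val j) → |τ x - τ y| < ε) : Continuous τ := by
  rw [continuous_iff_continuousAt]
  intro x
  rw [ContinuousAt, Metric.tendsto_nhds]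
  intro ε hε
  obtain ⟨N, hN⟩ := h ε hε
  refine Filter.eventually_of_mem ((isOpen_agree x.val N).mem_nhds fun j _ => rfl) fun y hy => ?_
  rw [Real.dist_eq]
  exact hN y x fun j hj => (hy j hj)

lemma cyl_one (k : ℕ) : cyl B [k] = {y : Shift B | y.val 0 = k} := by
  rw [cyl_eq]; ext y; simp

lemma cyl_nil : cyl B ([] : List ℕ) = Set.univ := by
  rw [cyl_eq]; ext y; simp

/-- every open set is a union of cylinders -/
lemma open_eq_iUnion_cyl {U : Set (Shift B)} (hU : IsOpen U) :
    ∃ T : Set (List ℕ), (⋃ w ∈ T, cyl B w) = U := by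
  classical
  refine ⟨{w | cyl B w ⊆ U}, ?_⟩
  apply Set.Subset.antisymm
  · simp only [Set.iUnion_subset_iff, Set.mem_setOf_eq]; exact fun w hw => hw
  · intro x hx
    obtain ⟨N, hN⟩ := exists_agree_subset hU hx
    have hmem : word x N ∈ {w | cyl B w ⊆ U} := by
      simp only [Set.mem_setOf_eq, cyl_word]; exact hN
    exact Set.mem_biUnion hmem (mem_cyl_word x N)

lemma restrict_eval {τ : Shift B → ℝ} (hτm : Measurable τ) {c : ℝ}
    (hcτ : ∀ x, c ≤ τ x) (μ' : Measure (Shift B)) [SFinite μ']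
    {s : Set (Shift B)} (hs : MeasurableSet s) :
    ((μ'.prod volume).restrict {p : Shift B × ℝ | 0 ≤ p.2 ∧ p.2 < τ p.1})
      (s ×ˢ Set.Icc 0 c) = ENNReal.ofReal c * μ' s := by
  have hSm : MeasurableSet {p : Shift B × ℝ | 0 ≤ p.2 ∧ p.2 < τ p.1} := by
    apply MeasurableSet.inter
    · exact measurable_snd measurableSet_Ici
    · exact measurableSet_lt measurable_snd (hτm.comp measurable_fst)
  rw [Measure.restrict_apply (hs.prod measurableSet_Icc)]
  have hEm : MeasurableSet (s ×ˢ Set.Icc 0 c ∩ {p : Shift B × ℝ | 0 ≤ p.2 ∧ p.2 < τ p.1}) :=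
    (hs.prod measurableSet_Icc).inter hSm
  rw [Measure.prod_apply hEm]
  have key : (fun x => volume (Prod.mk x ⁻¹'
      (s ×ˢ Set.Icc 0 c ∩ {p : Shift B × ℝ | 0 ≤ p.2 ∧ p.2 < τ p.1})))
      = s.indicator (fun _ => ENNReal.ofReal c) := by
    funext x
    by_cases hx : x ∈ s
    · have hset : Prod.mk x ⁻¹' (s ×ˢ Set.Icc 0 c ∩ {p : Shift B × ℝ | 0 ≤ p.2 ∧ p.2 < τ p.1})
          = Set.Icc 0 c ∩ Set.Iio (τ x) := by
        ext t
        simp only [Set.mem_preimage, Set.mem_inter_iff, Set.mem_prod, Set.mem_Icc,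
          Set.mem_setOf_eq, Set.mem_Iio, hx, true_and]
        constructor
        · rintro ⟨⟨h1, h2⟩, _, h4⟩; exact ⟨⟨h1, h2⟩, h4⟩
        · rintro ⟨⟨h1, h2⟩, h3⟩; exact ⟨⟨h1, h2⟩, h1, h3⟩
      rw [hset, Set.indicator_of_mem hx]
      apply le_antisymm
      · calc volume (Set.Icc 0 c ∩ Set.Iio (τ x)) ≤ volume (Set.Icc 0 c) :=
              measure_mono Set.inter_subset_left
          _ = ENNReal.ofReal c := by rw [Real.volume_Icc, sub_zero]
      · calc ENNReal.ofReal c = volume (Set.Ico 0 c) := by rw [Real.volume_Ico, sub_zero]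
          _ ≤ volume (Set.Icc 0 c ∩ Set.Iio (τ x)) := by
              apply measure_mono
              intro t ht
              exact ⟨⟨ht.1, le_of_lt ht.2⟩, lt_of_lt_of_le ht.2 (hcτ x)⟩
    · have hset : Prod.mk x ⁻¹' (s ×ˢ Set.Icc 0 c ∩ {p : Shift B × ℝ | 0 ≤ p.2 ∧ p.2 < τ p.1})
          = ∅ := by
        ext t; simp [hx]
      rw [hset, Set.indicator_of_notMem hx, measure_empty]
  rw [key]
  simp [lintegral_indicator hs, mul_comm]

lemma integral_ge {τ : Shift B → ℝ} {c : ℝ} (hcτ : ∀ x, c ≤ τ x)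
    (μ' : Measure (Shift B)) [IsProbabilityMeasure μ'] (hint' : Integrable τ μ') :
    c ≤ ∫ x, τ x ∂μ' := by
  calc c = ∫ _, c ∂μ' := by simp
    _ ≤ ∫ x, τ x ∂μ' := integral_mono (integrable_const c) hint' hcτ

lemma susp_eval {τ : Shift B → ℝ} (hτm : Measurable τ) {c : ℝ} (hc : 0 < c)
    (hcτ : ∀ x, c ≤ τ x) (μ' : Measure (Shift B)) [IsProbabilityMeasure μ']
    (hint' : Integrable τ μ') {s : Set (Shift B)} (hs : MeasurableSet s) :
    suspMeasure B τ μ' (s ×ˢ Set.Icc 0 c)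
      = ENNReal.ofReal (c * (μ' s).toReal / (∫ x, τ x ∂μ')) := by
  have hA0 : 0 < ∫ x, τ x ∂μ' := lt_of_lt_of_le hc (integral_ge hcτ μ' hint')
  rw [suspMeasure, Measure.smul_apply, restrict_eval hτm hcτ μ' hs, smul_eq_mul]
  rw [← ENNReal.ofReal_inv_of_pos hA0, ← ENNReal.ofReal_toReal (measure_ne_top μ' s),
    ← ENNReal.ofReal_mul (le_of_lt hc),
    ← ENNReal.ofReal_mul (by positivity : (0:ℝ) ≤ (∫ x, τ x ∂μ')⁻¹)]
  congr 1
  rw [div_eq_mul_inv, ENNReal.toReal_ofReal ENNReal.toReal_nonneg]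
  ring

lemma tendsto_ofReal_iff' {u : ℕ → ℝ} {v : ℝ} (hu : ∀ n, 0 ≤ u n) (hv : 0 ≤ v) :
    Tendsto (fun n => ENNReal.ofReal (u n)) atTop (𝓝 (ENNReal.ofReal v)) ↔
      Tendsto u atTop (𝓝 v) := by
  constructor
  · intro h
    have h2 := (ENNReal.tendsto_toReal ENNReal.ofReal_ne_top).comp h
    have h3 : ∀ n, (ENNReal.ofReal (u n)).toReal = u n := fun n =>
      ENNReal.toReal_ofReal (hu n)
    rw [ENNReal.toReal_ofReal hv] at h2
    exact h2.congr h3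
  · intro h
    exact (ENNReal.continuous_ofReal.tendsto v).comp h

/-- Markov inequality tail bound -/
lemma tail_bound {τ : Shift B → ℝ} {c : ℝ} (hc : 0 < c) (hcτ : ∀ x, c ≤ τ x)
    (μ' : Measure (Shift B)) [IsProbabilityMeasure μ'] (hint' : Integrable τ μ')
    {M : ℝ} (hM : 0 < M) {K : ℕ} (hK : ∀ x : Shift B, K ≤ x.val 0 → M ≤ τ x) :
    (μ' {x : Shift B | K ≤ x.val 0}).toReal ≤ (∫ x, τ x ∂μ') / M := by
  have h1 : μ' {x : Shift B | K ≤ x.val 0} ≤ μ' {x : Shift B | M ≤ τ x} :=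
    measure_mono fun x hx => hK x hx
  have h2 := mul_meas_ge_le_integral_of_nonneg
    (ae_of_all μ' fun x => le_trans hc.le (hcτ x)) hint' M
  calc (μ' {x : Shift B | K ≤ x.val 0}).toReal
      ≤ (μ' {x : Shift B | M ≤ τ x}).toReal :=
        ENNReal.toReal_mono (measure_ne_top _ _) h1
    _ ≤ (∫ x, τ x ∂μ') / M := by
        rw [le_div_iff₀ hM, mul_comm]
        exact h2



lemma measurableSet_ge_first (K : ℕ) : MeasurableSet {x : Shift B | K ≤ x.val 0} := by
  have : {x : Shift B | K ≤ x.val 0} = (fun y : Shift B => y.val 0) ⁻¹' (Set.Ici K) := rfl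
  rw [this]
  exact ((continuous_apply 0).comp continuous_subtype_val).measurable measurableSet_Ici

lemma partition_eq (μ' : Measure (Shift B)) [IsProbabilityMeasure μ'] (K : ℕ) :
    (∑ k ∈ Finset.range K, (μ' (cyl B [k])).toReal)
      + (μ' {x : Shift B | K ≤ x.val 0}).toReal = 1 := by
  have hU : (⋃ k ∈ Finset.range K, cyl B [k]) = {x : Shift B | x.val 0 < K} := by
    ext y; simp [cyl_one]
  have hdisj : Set.PairwiseDisjoint ↑(Finset.range K) (fun k => cyl B [k]) := by
    intro i _ j _ hij
    simp only [Function.onFun, cyl_one]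
    rw [Set.disjoint_left]
    intro y hy1 hy2
    exact hij (hy1 ▸ hy2 ▸ rfl)
  have hsum : μ' {x : Shift B | x.val 0 < K} = ∑ k ∈ Finset.range K, μ' (cyl B [k]) := by
    rw [← hU, measure_biUnion_finset hdisj fun k _ => measurableSet_cyl [k]]
  have hcompl : {x : Shift B | x.val 0 < K}ᶜ = {x : Shift B | K ≤ x.val 0} := by
    ext y; simp [not_lt]
  have hmeas : MeasurableSet {x : Shift B | x.val 0 < K} := by
    rw [← hU]; exact MeasurableSet.biUnion (Finset.range K).countable_toSet
      fun k _ => measurableSet_cyl [k]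
  have hadd := measure_add_measure_compl (μ := μ') hmeas
  rw [hcompl, hsum] at hadd
  have := congrArg ENNReal.toReal hadd
  rw [ENNReal.toReal_add (by simp [ENNReal.sum_lt_top, measure_ne_top]) (measure_ne_top _ _),
    ENNReal.toReal_sum fun k _ => measure_ne_top _ _] at this
  simpa using this

lemma indicator_bcf (w : List ℕ) :
    ∃ f : BoundedContinuousFunction (Shift B) ℝ,
      ∀ (μ' : Measure (Shift B)), IsProbabilityMeasure μ' →
        ∫ x, f x ∂μ' = (μ' (cyl B w)).toReal := by
  have hcont : Continuous ((cyl B w).indicator (fun _ => (1 : ℝ))) := by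
    rw [continuous_iff_continuousAt]
    intro x
    by_cases hx : x ∈ cyl B w
    · have : (cyl B w).indicator (fun _ => (1 : ℝ)) =ᶠ[𝓝 x] fun _ => (1 : ℝ) := by
        filter_upwards [(isOpen_cyl w).mem_nhds hx] with y hy
        simp [Set.indicator_of_mem hy]
      exact ContinuousAt.congr continuousAt_const this.symm
    · have : (cyl B w).indicator (fun _ => (1 : ℝ)) =ᶠ[𝓝 x] fun _ => (0 : ℝ) := by
        filter_upwards [(isClosed_cyl w).isOpen_compl.mem_nhds hx] with y hy
        simp [Set.indicator_of_notMem hy]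
      exact ContinuousAt.congr continuousAt_const this.symm
  refine ⟨BoundedContinuousFunction.ofNormedAddCommGroup _ hcont 1 fun x => ?_, ?_⟩
  · by_cases hx : x ∈ cyl B w <;> simp [Set.indicator_apply, hx]
  · intro μ' hμ'
    have : ∫ x, (cyl B w).indicator (fun _ => (1 : ℝ)) x ∂μ'
        = (μ' (cyl B w)).toReal • (1 : ℝ) :=
      integral_indicator_const (1 : ℝ) (measurableSet_cyl w)
    simpa [BoundedContinuousFunction.coe_ofNormedAddCommGroup] using this

lemma tendsto_biUnion_toReal {μs : ℕ → Measure (Shift B)} {μ : Measure (Shift B)}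
    [∀ n, IsProbabilityMeasure (μs n)] [IsProbabilityMeasure μ]
    (hcyl : ∀ w : List ℕ,
      Tendsto (fun n => (μs n (cyl B w)).toReal) atTop (𝓝 ((μ (cyl B w)).toReal)))
    (s : Finset (List ℕ)) :
    Tendsto (fun n => (μs n (⋃ w ∈ s, cyl B w)).toReal) atTop
      (𝓝 ((μ (⋃ w ∈ s, cyl B w)).toReal)) := by
  obtain ⟨t, hts, hdisj, hUeq⟩ := exists_disjoint_subfamily (B := B) s
  have key : ∀ (ν : Measure (Shift B)) [IsProbabilityMeasure ν],
      (ν (⋃ w ∈ s, cyl B w)).toReal = ∑ w ∈ t, (ν (cyl B w)).toReal := by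
    intro ν _
    rw [← hUeq, measure_biUnion_finset hdisj fun w _ => measurableSet_cyl w,
      ENNReal.toReal_sum fun w _ => measure_ne_top ν _]
  simp only [key]
  exact tendsto_finset_sum _ fun w _ => hcyl w



lemma tendsto_const_mul_iff' {c : ℝ} (hc : c ≠ 0) {u : ℕ → ℝ} {v : ℝ} :
    Tendsto (fun n => c * u n) atTop (𝓝 (c * v)) ↔ Tendsto u atTop (𝓝 v) := by
  constructor
  · intro h
    have h2 := h.const_mul c⁻¹
    simp only [← mul_assoc, inv_mul_cancel₀ hc, one_mul] at h2
    exact h2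
  · exact fun h => h.const_mul c

end Stmt19Aux

open Stmt19Aux in
theorem stmt19 (B : ℕ → ℕ → Prop) (τ : Shift B → ℝ) (hτ : ClassR B τ)
    (c : ℝ) (hc : 0 < c) (hcτ : ∀ x, c ≤ τ x)
    (μs : ℕ → Measure (Shift B)) (μ : Measure (Shift B))
    [∀ n, IsProbabilityMeasure (μs n)] [IsProbabilityMeasure μ]
    (hinvs : ∀ n, IsShiftInvariant B (μs n)) (hinv : IsShiftInvariant B μ)
    (hints : ∀ n, Integrable τ (μs n)) (hint : Integrable τ μ)
    (l : ℝ) (hl0 : 0 < l) (hl1 : l ≤ 1) :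
    (∀ w : List ℕ, w ≠ [] →
        Tendsto (fun n => suspMeasure B τ (μs n) (cyl B w ×ˢ Set.Icc 0 c)) atTop
          (𝓝 (ENNReal.ofReal l * suspMeasure B τ μ (cyl B w ×ˢ Set.Icc 0 c)))) ↔
    ((∀ f : BoundedContinuousFunction (Shift B) ℝ,
        Tendsto (fun n => ∫ x, f x ∂(μs n)) atTop (𝓝 (∫ x, f x ∂μ))) ∧
      Tendsto (fun n => (∫ x, τ x ∂μ) / (∫ x, τ x ∂(μs n))) atTop (𝓝 l)) := by
  classical
  have hτm : Measurable τ := (continuous_of_unif τ hτ.1).measurable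
  have hAn_pos : ∀ n, 0 < ∫ x, τ x ∂(μs n) := fun n =>
    lt_of_lt_of_le hc (integral_ge hcτ (μs n) (hints n))
  have hAμ_pos : 0 < ∫ x, τ x ∂μ := lt_of_lt_of_le hc (integral_ge hcτ μ hint)
  -- the suspension-measure convergence is equivalent to a real statement
  have hiff : ∀ w : List ℕ,
      (Tendsto (fun n => suspMeasure B τ (μs n) (cyl B w ×ˢ Set.Icc 0 c)) atTop
          (𝓝 (ENNReal.ofReal l * suspMeasure B τ μ (cyl B w ×ˢ Set.Icc 0 c)))) ↔
      Tendsto (fun n => (μs n (cyl B w)).toReal / (∫ x, τ x ∂(μs n))) atTop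
        (𝓝 (l * ((μ (cyl B w)).toReal / (∫ x, τ x ∂μ)))) := by
    intro w
    rw [susp_eval hτm hc hcτ μ hint (measurableSet_cyl w)]
    have hev : ∀ n, suspMeasure B τ (μs n) (cyl B w ×ˢ Set.Icc 0 c)
        = ENNReal.ofReal (c * (μs n (cyl B w)).toReal / (∫ x, τ x ∂(μs n))) := fun n =>
      susp_eval hτm hc hcτ (μs n) (hints n) (measurableSet_cyl w)
    simp only [hev]
    rw [← ENNReal.ofReal_mul hl0.le]
    rw [tendsto_ofReal_iff'
      (fun n => div_nonneg (by positivity) (hAn_pos n).le)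
      (mul_nonneg hl0.le (div_nonneg (by positivity) hAμ_pos.le))]
    have e1 : ∀ n, c * (μs n (cyl B w)).toReal / (∫ x, τ x ∂(μs n))
        = c * ((μs n (cyl B w)).toReal / (∫ x, τ x ∂(μs n))) := fun n => mul_div_assoc _ _ _
    have e2 : l * (c * (μ (cyl B w)).toReal / (∫ x, τ x ∂μ))
        = c * (l * ((μ (cyl B w)).toReal / (∫ x, τ x ∂μ))) := by ring
    simp only [e1, e2]
    exact tendsto_const_mul_iff' hc.ne'
  constructor
  · intro h
    have hreal : ∀ w : List ℕ, w ≠ [] →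
        Tendsto (fun n => (μs n (cyl B w)).toReal / (∫ x, τ x ∂(μs n))) atTop
          (𝓝 (l * ((μ (cyl B w)).toReal / (∫ x, τ x ∂μ)))) :=
      fun w hw => (hiff w).mp (h w hw)
    -- convergence of the reciprocals of the integrals
    have hinv' : Tendsto (fun n => 1 / (∫ x, τ x ∂(μs n))) atTop
        (𝓝 (l / (∫ x, τ x ∂μ))) := by
      rw [Metric.tendsto_atTop]
      intro ε hε
      obtain ⟨K, hK⟩ := hτ.2.2.2 (4 / ε)
      have hM : (0:ℝ) < 4 / ε := by positivity
      have hsum : Tendsto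
          (fun n => ∑ k ∈ Finset.range K, (μs n (cyl B [k])).toReal / (∫ x, τ x ∂(μs n)))
          atTop (𝓝 (∑ k ∈ Finset.range K, l * ((μ (cyl B [k])).toReal / (∫ x, τ x ∂μ)))) :=
        tendsto_finset_sum _ fun k _ => hreal [k] (by simp)
      rw [Metric.tendsto_atTop] at hsum
      obtain ⟨N, hN⟩ := hsum (ε / 2) (by positivity)
      refine ⟨N, fun n hn => ?_⟩
      have hid1 : 1 / (∫ x, τ x ∂(μs n))
          = (∑ k ∈ Finset.range K, (μs n (cyl B [k])).toReal / (∫ x, τ x ∂(μs n)))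
            + (μs n {x : Shift B | K ≤ x.val 0}).toReal / (∫ x, τ x ∂(μs n)) := by
        rw [← Finset.sum_div, ← add_div, partition_eq (μs n) K]
      have hid2 : l / (∫ x, τ x ∂μ)
          = (∑ k ∈ Finset.range K, l * ((μ (cyl B [k])).toReal / (∫ x, τ x ∂μ)))
            + l * ((μ {x : Shift B | K ≤ x.val 0}).toReal / (∫ x, τ x ∂μ)) := by
        have hp := partition_eq μ K
        have expand : ∀ r : ℝ, l * (r / (∫ x, τ x ∂μ)) = l * r / (∫ x, τ x ∂μ) :=
          fun r => (mul_div_assoc _ _ _).symm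
        simp only [expand]
        rw [← Finset.sum_div, ← add_div, ← Finset.mul_sum, ← mul_add, hp, mul_one]
      have ht1 : (μs n {x : Shift B | K ≤ x.val 0}).toReal / (∫ x, τ x ∂(μs n)) ≤ ε / 4 := by
        have hb := tail_bound hc hcτ (μs n) (hints n) hM hK
        calc (μs n {x : Shift B | K ≤ x.val 0}).toReal / (∫ x, τ x ∂(μs n))
            ≤ ((∫ x, τ x ∂(μs n)) / (4 / ε)) / (∫ x, τ x ∂(μs n)) :=
              div_le_div_of_nonneg_right hb (hAn_pos n).le
          _ = ε / 4 := by
              field_simp [(hAn_pos n).ne']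
      have ht2 : l * ((μ {x : Shift B | K ≤ x.val 0}).toReal / (∫ x, τ x ∂μ)) ≤ ε / 4 := by
        have hb := tail_bound hc hcτ μ hint hM hK
        have h2 : (μ {x : Shift B | K ≤ x.val 0}).toReal / (∫ x, τ x ∂μ)
            ≤ ((∫ x, τ x ∂μ) / (4 / ε)) / (∫ x, τ x ∂μ) :=
          div_le_div_of_nonneg_right hb hAμ_pos.le
        have h3 : ((∫ x, τ x ∂μ) / (4 / ε)) / (∫ x, τ x ∂μ) = ε / 4 := by
          field_simp [hAμ_pos.ne']
        have h4 : (μ {x : Shift B | K ≤ x.val 0}).toReal / (∫ x, τ x ∂μ) ≤ ε / 4 :=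
          h2.trans_eq h3
        calc l * ((μ {x : Shift B | K ≤ x.val 0}).toReal / (∫ x, τ x ∂μ))
            ≤ 1 * (ε / 4) := by
              apply mul_le_mul hl1 h4 (div_nonneg ENNReal.toReal_nonneg hAμ_pos.le) zero_le_one
          _ = ε / 4 := one_mul _
      have hnn1 : 0 ≤ (μs n {x : Shift B | K ≤ x.val 0}).toReal / (∫ x, τ x ∂(μs n)) :=
        div_nonneg ENNReal.toReal_nonneg (hAn_pos n).le
      have hnn2 : 0 ≤ l * ((μ {x : Shift B | K ≤ x.val 0}).toReal / (∫ x, τ x ∂μ)) :=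
        mul_nonneg hl0.le (div_nonneg ENNReal.toReal_nonneg hAμ_pos.le)
      have hdist := hN n hn
      rw [Real.dist_eq] at hdist ⊢
      rw [hid1, hid2]
      have hre : (∑ k ∈ Finset.range K, (μs n (cyl B [k])).toReal / (∫ x, τ x ∂(μs n)))
            + (μs n {x : Shift B | K ≤ x.val 0}).toReal / (∫ x, τ x ∂(μs n))
            - ((∑ k ∈ Finset.range K, l * ((μ (cyl B [k])).toReal / (∫ x, τ x ∂μ)))
            + l * ((μ {x : Shift B | K ≤ x.val 0}).toReal / (∫ x, τ x ∂μ)))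
          = ((∑ k ∈ Finset.range K, (μs n (cyl B [k])).toReal / (∫ x, τ x ∂(μs n)))
            - (∑ k ∈ Finset.range K, l * ((μ (cyl B [k])).toReal / (∫ x, τ x ∂μ))))
            + ((μs n {x : Shift B | K ≤ x.val 0}).toReal / (∫ x, τ x ∂(μs n))
            - l * ((μ {x : Shift B | K ≤ x.val 0}).toReal / (∫ x, τ x ∂μ))) := by ring
      rw [hre]
      calc |_ + _| ≤ _ + _ := abs_add_le _ _
        _ < ε := by
            have habs2 : |(μs n {x : Shift B | K ≤ x.val 0}).toReal / (∫ x, τ x ∂(μs n))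
                - l * ((μ {x : Shift B | K ≤ x.val 0}).toReal / (∫ x, τ x ∂μ))| ≤ ε / 4 :=
              abs_sub_le_iff.mpr ⟨by linarith, by linarith⟩
            linarith
    have hratio : Tendsto (fun n => (∫ x, τ x ∂μ) / (∫ x, τ x ∂(μs n))) atTop (𝓝 l) := by
      have h2 := hinv'.const_mul (∫ x, τ x ∂μ)
      have e : (∫ x, τ x ∂μ) * (l / (∫ x, τ x ∂μ)) = l := by field_simp
      rw [e] at h2
      refine h2.congr fun n => ?_
      rw [mul_one_div]
    refine ⟨?_, hratio⟩
    have hAconv : Tendsto (fun n => ∫ x, τ x ∂(μs n)) atTop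
        (𝓝 ((∫ x, τ x ∂μ) / l)) := by
      have h2 := hinv'.inv₀ (by positivity : l / (∫ x, τ x ∂μ) ≠ 0)
      simp only [one_div, inv_inv, inv_div] at h2
      exact h2
    have hcyl : ∀ w : List ℕ, Tendsto (fun n => (μs n (cyl B w)).toReal) atTop
        (𝓝 ((μ (cyl B w)).toReal)) := by
      intro w
      rcases eq_or_ne w [] with rfl | hw
      · simp only [cyl_nil, measure_univ, ENNReal.toReal_one]
        exact tendsto_const_nhds
      · have h1 := (hreal w hw).mul hAconv
        have e2 : l * ((μ (cyl B w)).toReal / (∫ x, τ x ∂μ)) * ((∫ x, τ x ∂μ) / l)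
            = (μ (cyl B w)).toReal := by field_simp
        rw [e2] at h1
        refine h1.congr fun n => ?_
        exact div_mul_cancel₀ _ (hAn_pos n).ne'
    -- weak convergence via portmanteau
    intro f
    have hPM : IsProbabilityMeasure μ := inferInstance
    set μP : ProbabilityMeasure (Shift B) := ⟨μ, hPM⟩ with hμP
    set μsP : ℕ → ProbabilityMeasure (Shift B) := fun n => ⟨μs n, inferInstance⟩ with hμsP
    have hweakP : Tendsto μsP atTop (𝓝 μP) := by
      apply MeasureTheory.tendsto_of_forall_isOpen_le_liminf
      intro G hG
      obtain ⟨T, hTU⟩ := open_eq_iUnion_cyl hG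
      set e : ℕ ≃ List ℕ := (Denumerable.eqv (List ℕ)).symm with he
      set sF : ℕ → Finset (List ℕ) :=
        fun N => ((Finset.range N).image e).filter (· ∈ T) with hsF
      set F : ℕ → Set (Shift B) := fun N => ⋃ w ∈ sF N, cyl B w with hF
      have hmemsF : ∀ N w, w ∈ sF N ↔ (∃ m < N, e m = w) ∧ w ∈ T := by
        intro N w
        simp only [hsF, Finset.mem_filter, Finset.mem_image, Finset.mem_range]
      have hsFmono : ∀ a b : ℕ, a ≤ b → ∀ w, w ∈ sF a → w ∈ sF b := by
        intro a b hab w hw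
        rw [hmemsF] at hw ⊢
        obtain ⟨⟨m, hm, hme⟩, hwT⟩ := hw
        exact ⟨⟨m, lt_of_lt_of_le hm hab, hme⟩, hwT⟩
      have hFmono : Monotone F := by
        intro a b hab x hx
        obtain ⟨w, hw, hxw⟩ := Set.mem_iUnion₂.mp hx
        exact Set.mem_iUnion₂.mpr ⟨w, hsFmono a b hab w hw, hxw⟩
      have hFG : ∀ N, F N ⊆ G := by
        intro N
        rw [← hTU]
        apply Set.iUnion₂_subset
        intro w hw
        have hwT : w ∈ T := ((hmemsF N w).mp hw).2
        exact Set.subset_biUnion_of_mem hwT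
      have hFU : (⋃ N, F N) = G := by
        apply Set.Subset.antisymm (Set.iUnion_subset hFG)
        rw [← hTU]
        intro x hx
        obtain ⟨w, hwT, hxw⟩ := Set.mem_iUnion₂.mp hx
        refine Set.mem_iUnion.mpr ⟨e.symm w + 1, Set.mem_iUnion₂.mpr ⟨w, ?_, hxw⟩⟩
        rw [hmemsF]
        exact ⟨⟨e.symm w, Nat.lt_succ_self _, e.apply_symm_apply w⟩, hwT⟩
      have htendF : Tendsto (fun N => μ (F N)) atTop (𝓝 (μ G)) := by
        have h2 := tendsto_measure_iUnion_atTop (μ := μ) hFmono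
        rwa [hFU] at h2
      have htendFnn : Tendsto (fun N => μP (F N)) atTop (𝓝 (μP G)) := by
        have h2 := (ENNReal.tendsto_toNNReal (measure_ne_top μ G)).comp htendF
        exact h2
      apply le_of_tendsto htendFnn
      filter_upwards with N
      have htendn : Tendsto (fun i => μsP i (F N)) atTop (𝓝 (μP (F N))) := by
        rw [← NNReal.tendsto_coe]
        exact tendsto_biUnion_toReal hcyl (sF N)
      rw [← htendn.liminf_eq]
      apply Filter.liminf_le_liminf
      · exact Eventually.of_forall fun i => (μsP i).apply_mono (hFG N)
      · exact Filter.isBoundedUnder_of (r := (· ≥ ·)) ⟨0, fun i => zero_le⟩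
      · exact Filter.isCoboundedUnder_ge_of_le atTop fun i => (μsP i).apply_le_one _
    exact MeasureTheory.ProbabilityMeasure.tendsto_iff_forall_integral_tendsto.mp hweakP f
  · rintro ⟨hweak, hratio⟩
    intro w hw
    rw [hiff w]
    obtain ⟨f, hf⟩ := indicator_bcf (B := B) w
    have hP : Tendsto (fun n => (μs n (cyl B w)).toReal) atTop
        (𝓝 ((μ (cyl B w)).toReal)) := by
      have h2 := hweak f
      rw [hf μ inferInstance] at h2
      exact h2.congr fun n => hf (μs n) inferInstance
    have h1 := hP.mul hratio
    have h2 := h1.div_const (∫ x, τ x ∂μ)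
    have e2 : (μ (cyl B w)).toReal * l / (∫ x, τ x ∂μ)
        = l * ((μ (cyl B w)).toReal / (∫ x, τ x ∂μ)) := by ring
    rw [e2] at h2
    refine h2.congr fun n => ?_
    field_simp [(hAn_pos n).ne', hAμ_pos.ne']
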